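/- arXiv:2302.11842 — 5 statements merged into one kernel-verified Lean document; each statement's English description precedes it below -/
import Mathlib

section
/- For every integer k ≥ 1 and all u, v, z ∈ ℂ with u−v, u−z and v−z all nonzero, Yang's R-matrix satisfies the quantum Yang–Baxter equation R₁₂(u−v)·R₁₃(u−z)·R₂₃(v−z) = R₂₃(v−z)·R₁₃(u−z)·R₁₂(u−v) as linear operators on ℂ^k⊗ℂ^k⊗ℂ^k. -/
open scoped BigOperators Classical

noncomputable section

namespace TY

/-- The permutation operator `P` on `ℂ^k ⊗ ℂ^k`. -/
def Pm (k : ℕ) : Matrix (Fin k × Fin k) (Fin k × Fin k) ℂ :=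
  Matrix.of fun x y => if x.1 = y.2 ∧ x.2 = y.1 then 1 else 0

/-- Yang's R-matrix `R(u) = I - u⁻¹ P` on `ℂ^k ⊗ ℂ^k`. -/
def Rm (k : ℕ) (c : ℂ) : Matrix (Fin k × Fin k) (Fin k × Fin k) ℂ := 1 - c⁻¹ • Pm k

/-- An operator on the first two factors of `ℂ^k ⊗ ℂ^k ⊗ ℂ^k`. -/
def op12 (k : ℕ) (M : Matrix (Fin k × Fin k) (Fin k × Fin k) ℂ) :
    Matrix (Fin k × Fin k × Fin k) (Fin k × Fin k × Fin k) ℂ :=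
  Matrix.of fun x y => M (x.1, x.2.1) (y.1, y.2.1) * (if x.2.2 = y.2.2 then 1 else 0)

/-- An operator on the first and third factors of `ℂ^k ⊗ ℂ^k ⊗ ℂ^k`. -/
def op13 (k : ℕ) (M : Matrix (Fin k × Fin k) (Fin k × Fin k) ℂ) :
    Matrix (Fin k × Fin k × Fin k) (Fin k × Fin k × Fin k) ℂ :=
  Matrix.of fun x y => M (x.1, x.2.2) (y.1, y.2.2) * (if x.2.1 = y.2.1 then 1 else 0)

/-- An operator on the last two factors of `ℂ^k ⊗ ℂ^k ⊗ ℂ^k`. -/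
def op23 (k : ℕ) (M : Matrix (Fin k × Fin k) (Fin k × Fin k) ℂ) :
    Matrix (Fin k × Fin k × Fin k) (Fin k × Fin k × Fin k) ℂ :=
  Matrix.of fun x y => M (x.2.1, x.2.2) (y.2.1, y.2.2) * (if x.1 = y.1 then 1 else 0)

section aux
variable (k : ℕ)

abbrev A := op12 k (Pm k)
abbrev B := op13 k (Pm k)
abbrev C := op23 k (Pm k)

lemma op12_Rm (c : ℂ) : op12 k (Rm k c) = 1 - c⁻¹ • A k := by
  ext ⟨a,b,c'⟩ ⟨d,e,f⟩
  simp [op12, Rm, Matrix.one_apply, Prod.ext_iff, ite_and, Matrix.sub_apply, sub_mul]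
  split_ifs <;> simp_all

lemma op13_Rm (c : ℂ) : op13 k (Rm k c) = 1 - c⁻¹ • B k := by
  ext ⟨a,b,c'⟩ ⟨d,e,f⟩
  simp [op13, Rm, Matrix.one_apply, Prod.ext_iff, ite_and, Matrix.sub_apply, sub_mul]
  split_ifs <;> simp_all

lemma op23_Rm (c : ℂ) : op23 k (Rm k c) = 1 - c⁻¹ • C k := by
  ext ⟨a,b,c'⟩ ⟨d,e,f⟩
  simp [op23, Rm, Matrix.one_apply, Prod.ext_iff, ite_and, Matrix.sub_apply, sub_mul]
  split_ifs <;> simp_all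

lemma hAB : A k * B k = C k * A k := by
  ext ⟨a,b,c⟩ ⟨d,e,f⟩
  simp [Matrix.mul_apply, op12, op13, op23, Pm, Fintype.sum_prod_type, ite_and]
  split_ifs <;> simp_all

lemma hBC : B k * C k = A k * B k := by
  ext ⟨a,b,c⟩ ⟨d,e,f⟩
  simp [Matrix.mul_apply, op12, op13, op23, Pm, Fintype.sum_prod_type, ite_and]
  split_ifs <;> simp_all

lemma hBA : B k * A k = A k * C k := by
  ext ⟨a,b,c⟩ ⟨d,e,f⟩
  simp [Matrix.mul_apply, op12, op13, op23, Pm, Fintype.sum_prod_type, ite_and]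
  split_ifs <;> simp_all

lemma hCB : C k * B k = B k * A k := by
  ext ⟨a,b,c⟩ ⟨d,e,f⟩
  simp [Matrix.mul_apply, op12, op13, op23, Pm, Fintype.sum_prod_type, ite_and]
  split_ifs <;> simp_all

lemma hCC : C k * C k = 1 := by
  ext ⟨a,b,c⟩ ⟨d,e,f⟩
  simp [Matrix.mul_apply, op23, Pm, Fintype.sum_prod_type, ite_and, Matrix.one_apply, Prod.ext_iff]

lemma hAA : A k * A k = 1 := by
  ext ⟨a,b,c⟩ ⟨d,e,f⟩
  simp [Matrix.mul_apply, op12, Pm, Fintype.sum_prod_type, ite_and, Matrix.one_apply, Prod.ext_iff]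
  split_ifs <;> simp_all

lemma expand {n : Type*} [Fintype n] [DecidableEq n] (a b c : ℂ)
    (X Y Z : Matrix n n ℂ) :
    (1 - a • X) * (1 - b • Y) * (1 - c • Z) =
      1 - a • X - b • Y - c • Z + (a*b) • (X*Y) + (a*c) • (X*Z) + (b*c) • (Y*Z)
        - (a*b*c) • (X*Y*Z) := by
  simp only [sub_mul, mul_sub, one_mul, mul_one, smul_mul_assoc, mul_smul_comm, smul_smul]
  module

end aux

set_option maxHeartbeats 1000000 in
/-- the quantum Yang–Baxter equation for Yang's R-matrix. -/
theorem yang_baxter_equation (k : ℕ) (hk : 1 ≤ k) (u v z : ℂ)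
    (huv : u - v ≠ 0) (huz : u - z ≠ 0) (hvz : v - z ≠ 0) :
    op12 k (Rm k (u - v)) * op13 k (Rm k (u - z)) * op23 k (Rm k (v - z)) =
      op23 k (Rm k (v - z)) * op13 k (Rm k (u - z)) * op12 k (Rm k (u - v)) := by
  rw [op12_Rm, op13_Rm, op23_Rm]
  have e1 := hAB k
  have e2 := hBC k
  have e3 := hBA k
  have e4 := hCB k
  have e5 := hCC k
  have e6 := hAA k
  set A' := A k
  set B' := B k
  set C' := C k
  have tri : A' * B' * C' = B' := by rw [← e2, mul_assoc, e5, mul_one]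
  have tri2 : C' * B' * A' = B' := by rw [e4, mul_assoc, e6, mul_one]
  rw [expand, expand, tri, tri2, e4, e3, ← e1, e2]
  have key : (u-v)⁻¹ * (u-z)⁻¹ + (u-z)⁻¹ * (v-z)⁻¹ = (u-v)⁻¹ * (v-z)⁻¹ := by
    field_simp
    ring
  match_scalars
  all_goals first | linear_combination key | linear_combination -key | linear_combination (2:ℂ)*key | linear_combination (-2:ℂ)*key | ring1


end TY
end
end

section
/- Let p ≥ 1 and let v₁, …, v_p, w ∈ ℂ satisfy v_j ≠ w for all j, v_k ≠ v₁ for k ≥ 2, and v_j − v₁ ≠ −1 for all j. Then 1/(v₁ − w) = Σ_{j=1}^{p} [ 1/((v_j − v₁ + 1)(v_j − w)) ] · ∏_{k=j+1}^{p} f^+(v_k, w)/f^+(v_k, v₁). -/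
/-!
Write `r k = f⁺(v_k, w) / f⁺(v_k, v₁)`. Each summand factors as `(1 - r_j) / (v₁ - w)` times the
tail product `∏_{k > j} r_k`, so the sum telescopes to `(1 - ∏_k r_k) / (v₁ - w)`, and the full
product vanishes because its first factor does.
-/

open scoped BigOperators Classical

noncomputable section

namespace TY

/-- `f⁺(u,v) := (u - v + 1)/(u - v)`. -/
def fp (a b : ℂ) : ℂ := (a - b + 1) / (a - b)

theorem _root_.Finset.sum_one_sub_mul_prod_gt {ι R : Type*} [CommRing R] [LinearOrder ι]
    (s : Finset ι) (r : ι → R) :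
    ∑ i ∈ s, (1 - r i) * ∏ j ∈ s with i < j, r j = 1 - ∏ i ∈ s, r i := by
  have h := Finset.prod_add_ordered s r (fun i => 1 - r i)
  simp only [add_sub_cancel, Finset.prod_const_one, mul_one] at h
  exact eq_sub_of_add_eq' h.symm

theorem fp_self (a : ℂ) : fp a a = 0 := by simp [fp]

/-- For `x = y` this holds because `fp y y = 0` (division by zero). -/
theorem one_div_mul_eq_one_div_mul_one_sub_fp_div {x y w : ℂ} (hx : x ≠ w) (hy : y ≠ w)
    (hxy : x - y ≠ -1) :
    1 / ((x - y + 1) * (x - w)) = 1 / (y - w) * (1 - fp x w / fp x y) := by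
  rcases eq_or_ne x y with rfl | hne
  · simp [fp_self]
  have hxw : x - w ≠ 0 := sub_ne_zero.mpr hx
  have hyw : y - w ≠ 0 := sub_ne_zero.mpr hy
  have hxy' : x - y ≠ 0 := sub_ne_zero.mpr hne
  have hxy1 : x - y + 1 ≠ 0 := fun h => hxy (eq_neg_of_add_eq_zero_left h)
  simp only [fp]
  field_simp
  ring

theorem partial_fraction_sum_identity_general (p : ℕ) (hp : 0 < p) (v : Fin p → ℂ) (w : ℂ)
    (h1 : ∀ j, v j ≠ w)
    (h3 : ∀ j, v j - v ⟨0, hp⟩ ≠ -1) :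
    1 / (v ⟨0, hp⟩ - w) =
      ∑ j : Fin p, (1 / ((v j - v ⟨0, hp⟩ + 1) * (v j - w))) *
        ∏ k ∈ Finset.univ.filter (fun k => j < k), fp (v k) w / fp (v k) (v ⟨0, hp⟩) := by
  set v₁ := v ⟨0, hp⟩
  set r : Fin p → ℂ := fun k => fp (v k) w / fp (v k) v₁
  have hr : ∏ k, r k = 0 :=
    Finset.prod_eq_zero (Finset.mem_univ ⟨0, hp⟩) (by simp [r, v₁, fp_self])
  calc 1 / (v₁ - w) = 1 / (v₁ - w) * (1 - ∏ k, r k) := by rw [hr, sub_zero, mul_one]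
    _ = ∑ j, 1 / (v₁ - w) * ((1 - r j) * ∏ k ∈ Finset.univ.filter (fun k => j < k), r k) := by
      rw [← Finset.sum_one_sub_mul_prod_gt, Finset.mul_sum]
    _ = _ := Finset.sum_congr rfl fun j _ => by
      rw [one_div_mul_eq_one_div_mul_one_sub_fp_div (h1 j) (h1 _) (h3 j), mul_assoc]

/-- for `p ≥ 1` and `v₁, …, v_p, w` with `v_j ≠ w`, `v_k ≠ v₁` (k ≥ 2) and
`v_j − v₁ ≠ −1`, one has
`1/(v₁ − w) = Σ_{j=1}^{p} [1/((v_j − v₁ + 1)(v_j − w))] ∏_{k=j+1}^{p} f⁺(v_k,w)/f⁺(v_k,v₁)`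
(indices realised 0-based, so `v₁ = v 0`). -/
theorem partial_fraction_sum_identity (p : ℕ) (hp : 0 < p) (v : Fin p → ℂ) (w : ℂ)
    (h1 : ∀ j, v j ≠ w)
    (h2 : ∀ k : Fin p, k ≠ ⟨0, hp⟩ → v k ≠ v ⟨0, hp⟩)
    (h3 : ∀ j, v j - v ⟨0, hp⟩ ≠ -1) :
    1 / (v ⟨0, hp⟩ - w) =
      ∑ j : Fin p, (1 / ((v j - v ⟨0, hp⟩ + 1) * (v j - w))) *
        ∏ k ∈ Finset.univ.filter (fun k => j < k), fp (v k) w / fp (v k) (v ⟨0, hp⟩) :=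
  partial_fraction_sum_identity_general p hp v w h1 h3
end TY
end
end

section
/- Let p ≥ 1, 1 ≤ i ≤ p, and let v, w₁, …, w_p ∈ ℂ satisfy v ≠ w_k for all k, and w_k ≠ w_i and w_k − w_i ≠ −1 for all k > i, as well as w_l − w_i ≠ −1 for i ≤ l ≤ p. Then [ ∏_{k≤p, k≠i} f^+(v, w_k) ] / (v − w_i) = Σ_{l=i}^{p} [ ∏_{k=1}^{l−1} f^+(v, w_k) ] · [ ∏_{k=l+1}^{p} f^+(w_k, w_i) ]^{−1} · 1/((w_l − w_i + 1)(v − w_l)). -/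
/-!
Appending a new point `w_n` multiplies the left side by `f⁺(v, w_n)`, multiplies every old summand
by `f⁺(w_n, w_i)⁻¹` and adds the summand `l = n`. The partial fraction identity
`f⁺(v,a)/(v-b) = f⁺(a,b)⁻¹/(v-b) + f⁺(v,b)/((a-b+1)(v-a))` says exactly that both sides
change in the same way, so the identity follows by induction on the number of points, starting
from the case where `w_i` is the last one.
-/

open scoped BigOperators Classical

noncomputable section

namespace TY

open Finset

theorem fp_div_sub_eq_inv_fp_div_add {v a b : ℂ} (hva : v ≠ a) (hvb : v ≠ b) (hab : a ≠ b)
    (hab1 : a - b + 1 ≠ 0) :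
    fp v a / (v - b) = (fp a b)⁻¹ / (v - b) + fp v b / ((a - b + 1) * (v - a)) := by
  have hva' : v - a ≠ 0 := sub_ne_zero.mpr hva
  have hvb' : v - b ≠ 0 := sub_ne_zero.mpr hvb
  have hab' : a - b ≠ 0 := sub_ne_zero.mpr hab
  rw [fp, fp, fp, inv_div]
  field_simp
  ring

theorem telescoping_fplus_identity_nat (i n : ℕ) (hin : i < n) (v : ℂ) (w : ℕ → ℂ)
    (h1 : ∀ k, i ≤ k → k < n → v ≠ w k)
    (h2 : ∀ k, i < k → k < n → w k ≠ w i)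
    (h3 : ∀ l, i ≤ l → l < n → w l - w i ≠ -1) :
    (∏ k ∈ (range n).erase i, fp v (w k)) / (v - w i) =
      ∑ l ∈ Ico i n, (∏ k ∈ range l, fp v (w k)) * (∏ k ∈ Ioo l n, fp (w k) (w i))⁻¹ *
        (1 / ((w l - w i + 1) * (v - w l))) := by
  induction n, hin using Nat.le_induction with
  | base =>
    rw [Nat.succ_eq_add_one, range_add_one, erase_insert notMem_range_self,
      Nat.Ico_succ_singleton, sum_singleton, Ioo_add_one_right_eq_Ioc, Ioc_self]
    simp [div_eq_mul_inv]
  | succ n hin ih =>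
    have hin' : i < n := hin
    specialize ih (fun k hik hk => h1 k hik (by omega)) (fun k hik hk => h2 k hik (by omega))
      (fun l hil hl => h3 l hil (by omega))
    have hlhs : (range (n + 1)).erase i = insert n ((range n).erase i) := by
      rw [range_add_one, erase_insert_of_ne hin'.ne']
    have hprod_split :
        ∏ k ∈ range n, fp v (w k) = fp v (w i) * ∏ k ∈ (range n).erase i, fp v (w k) :=
      (mul_prod_erase _ _ (mem_range.mpr hin')).symm
    have hsummand : ∀ l ∈ Ico i n,
        (∏ k ∈ Ioo l (n + 1), fp (w k) (w i))⁻¹ =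
          (fp (w n) (w i))⁻¹ * (∏ k ∈ Ioo l n, fp (w k) (w i))⁻¹ := by
      intro l hl
      rw [Ioo_add_one_right_eq_Ioc, ← Ioo_insert_right (mem_Ico.mp hl).2,
        prod_insert right_notMem_Ioo, mul_inv]
    rw [hlhs, prod_insert (by simp), Nat.Ico_succ_right_eq_insert_Ico hin'.le,
      sum_insert right_notMem_Ico, Ioo_add_one_right_eq_Ioc, Ioc_self, prod_empty, inv_one,
      mul_one]
    have hsum : ∑ l ∈ Ico i n, (∏ k ∈ range l, fp v (w k)) *
        (∏ k ∈ Ioo l (n + 1), fp (w k) (w i))⁻¹ * (1 / ((w l - w i + 1) * (v - w l))) =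
          (fp (w n) (w i))⁻¹ * ((∏ k ∈ (range n).erase i, fp v (w k)) / (v - w i)) := by
      rw [ih, mul_sum]
      refine sum_congr rfl fun l hl => ?_
      rw [hsummand l hl]
      ring
    have hkey := fp_div_sub_eq_inv_fp_div_add (h1 n hin'.le n.lt_succ_self)
      (h1 i le_rfl (by omega))
      (h2 n hin' n.lt_succ_self) fun h => h3 n hin'.le n.lt_succ_self (by linear_combination h)
    rw [hsum, hprod_split]
    linear_combination (∏ k ∈ (range n).erase i, fp v (w k)) * hkey

/-- for `1 ≤ i ≤ p`, `v ≠ w_k`, `w_k ≠ w_i` and `w_k − w_i ≠ −1` for `k > i`,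
and `w_l − w_i ≠ −1` for `i ≤ l ≤ p`:
`[∏_{k≠i} f⁺(v,w_k)]/(v − w_i)
  = Σ_{l=i}^{p} [∏_{k<l} f⁺(v,w_k)]·[∏_{k>l} f⁺(w_k,w_i)]⁻¹·1/((w_l − w_i + 1)(v − w_l))`
(indices realised 0-based). -/
theorem telescoping_fplus_identity (p : ℕ) (i : Fin p) (v : ℂ) (w : Fin p → ℂ)
    (h1 : ∀ k, v ≠ w k)
    (h2 : ∀ k, i < k → w k ≠ w i)
    (h3 : ∀ l, i ≤ l → w l - w i ≠ -1) :
    (∏ k ∈ Finset.univ.filter (fun k => k ≠ i), fp v (w k)) / (v - w i) =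
      ∑ l ∈ Finset.univ.filter (fun l => i ≤ l),
        (∏ k ∈ Finset.univ.filter (fun k => k < l), fp v (w k)) *
          (∏ k ∈ Finset.univ.filter (fun k => l < k), fp (w k) (w i))⁻¹ *
          (1 / ((w l - w i + 1) * (v - w l))) := by
  -- Extending `w` to `ℕ` turns the intervals of `Fin p` into intervals of `ℕ`.
  obtain ⟨W, rfl⟩ : ∃ W : ℕ → ℂ, w = fun k : Fin p => W k :=
    ⟨fun k => if h : k < p then w ⟨k, h⟩ else 0, by ext; simp⟩
  have h := telescoping_fplus_identity_nat i p i.isLt v W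
    (fun k _ hk => h1 ⟨k, hk⟩) (fun k hik hk => h2 ⟨k, hk⟩ hik)
    (fun l hil hl => h3 ⟨l, hl⟩ hil)
  have herase : (range p).erase (i : ℕ) = (univ.erase i).map Fin.valEmbedding := by
    rw [map_erase, Fin.map_valEmbedding_univ, Nat.Iio_eq_range]; rfl
  rw [herase, ← Fin.map_valEmbedding_Ici, prod_map, sum_map] at h
  simp only [Fin.valEmbedding_apply, ← Nat.Iio_eq_range, ← Fin.map_valEmbedding_Iio,
    ← Fin.map_valEmbedding_Ioi, prod_map] at h
  simpa only [filter_ne', filter_gt_eq_Iio, filter_lt_eq_Ioi, filter_le_eq_Ici] using h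

end TY
end
end

section
/- Let a, b, c, d, e ∈ ℂ be such that a ≠ b, c ≠ d, e ≠ d, c ≠ e and all denominators below are nonzero. Set β₁ := ((b−d)/(b−c))·( a−e+1 + (b−e)/(a−c) ), β₂ := f^+(a,c)·(a−e)/(b−c) + ((a−d)(b−e)+1)/(a−c), and γ := (a−d)(a−e)(b−d)(b−e). Then β₁ + β₂ = (γ/(c−e))·( K((a,b)|(c,d)) − K((a,b)|(e,d)) ). -/
open scoped BigOperators Classical

noncomputable section

namespace TY

/-- The domain-wall boundary partition function `K((a,b)|(c,d))` for 2-tuples: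
`K(𝐮|𝐯) = [∏_{i,j}(u_i−v_j+1)/∏_{i<j}(u_i−u_j)(v_j−v_i)]·det(1/((u_i−v_j)(u_i−v_j+1)))`. -/
def Ksq (a b c d : ℂ) : ℂ :=
  ((a - c + 1) * (a - d + 1) * (b - c + 1) * (b - d + 1) / ((a - b) * (d - c))) *
    (1 / ((a - c) * (a - c + 1)) * (1 / ((b - d) * (b - d + 1))) -
      1 / ((a - d) * (a - d + 1)) * (1 / ((b - c) * (b - c + 1))))

/-- The common numerator `M = (a-c)(b-c)·(β₁+β₂)`. -/
private def Mnum (a b c d e : ℂ) : ℂ :=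
  -e + d*e - c + c*e + c*d - 2*c*d*e + b - b*e - b*d + b*d*e - b*c + b*c*e + b*c*d
  + b^2 - b^2*d + a - a*e - a*d + a*d*e - a*c + a*c*e + a*c*d + a*b - 2*a*b*e
  - 2*a*b*c + a*b^2 + a^2 - a^2*d + a^2*b

private lemma key (x y z w s t : ℂ) (hx : x ≠ 0) (hy : y ≠ 0) (hz : z ≠ 0) (hw : w ≠ 0)
    (hx1 : x + 1 ≠ 0) (hy1 : y + 1 ≠ 0) (hz1 : z + 1 ≠ 0) (hw1 : w + 1 ≠ 0) :
    ((x + 1) * (y + 1) * (z + 1) * (w + 1) / (s * t)) *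
        (1 / (x * (x + 1)) * (1 / (w * (w + 1))) - 1 / (y * (y + 1)) * (1 / (z * (z + 1)))) =
      (y * (y + 1) * (z * (z + 1)) - x * (x + 1) * (w * (w + 1))) / (s * t * (x * y * z * w)) := by
  have hA : x * (x + 1) * (w * (w + 1)) ≠ 0 :=
    mul_ne_zero (mul_ne_zero hx hx1) (mul_ne_zero hw hw1)
  have hB : y * (y + 1) * (z * (z + 1)) ≠ 0 :=
    mul_ne_zero (mul_ne_zero hy hy1) (mul_ne_zero hz hz1)
  rw [one_div_mul_one_div, one_div_mul_one_div, div_sub_div _ _ hA hB, one_mul, mul_one,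
    div_mul_div_comm]
  have hX : (x + 1) * (y + 1) * (z + 1) * (w + 1) ≠ 0 :=
    mul_ne_zero (mul_ne_zero (mul_ne_zero hx1 hy1) hz1) hw1
  have h1 : (x + 1) * (y + 1) * (z + 1) * (w + 1) *
      (y * (y + 1) * (z * (z + 1)) - x * (x + 1) * (w * (w + 1))) =
      (y * (y + 1) * (z * (z + 1)) - x * (x + 1) * (w * (w + 1))) *
        ((x + 1) * (y + 1) * (z + 1) * (w + 1)) := by ring
  have h2 : s * t * (x * (x + 1) * (w * (w + 1)) * (y * (y + 1) * (z * (z + 1)))) =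
      s * t * (x * y * z * w) * ((x + 1) * (y + 1) * (z + 1) * (w + 1)) := by ring
  rw [h1, h2, mul_div_mul_right _ _ hX]

private lemma Ksq_eq (a b c d : ℂ) (hab : a - b ≠ 0) (hdc : d - c ≠ 0)
    (hac : a - c ≠ 0) (had : a - d ≠ 0) (hbc : b - c ≠ 0) (hbd : b - d ≠ 0)
    (hac1 : a - c + 1 ≠ 0) (had1 : a - d + 1 ≠ 0)
    (hbc1 : b - c + 1 ≠ 0) (hbd1 : b - d + 1 ≠ 0) :
    Ksq a b c d = ((a - c) * (b - d) + (a - d) * (b - c) + (a - c) + (b - d) + 1) /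
      ((a - c) * (a - d) * (b - c) * (b - d)) := by
  have h := key (a - c) (a - d) (b - c) (b - d) (a - b) (d - c) hac had hbc hbd
    hac1 had1 hbc1 hbd1
  rw [Ksq, h]
  have hnum : (a - d) * (a - d + 1) * ((b - c) * (b - c + 1)) -
      (a - c) * (a - c + 1) * ((b - d) * (b - d + 1)) =
      ((a - c) * (b - d) + (a - d) * (b - c) + (a - c) + (b - d) + 1) * ((a - b) * (d - c)) := by
    ring
  have hden : (a - b) * (d - c) * ((a - c) * (a - d) * (b - c) * (b - d)) =
      ((a - c) * (a - d) * (b - c) * (b - d)) * ((a - b) * (d - c)) := by ring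
  rw [hnum, hden, mul_div_mul_right _ _ (mul_ne_zero hab hdc)]

/-- with
`β₁ = ((b−d)/(b−c))·(a−e+1 + (b−e)/(a−c))`,
`β₂ = f⁺(a,c)·(a−e)/(b−c) + ((a−d)(b−e)+1)/(a−c)`,
`γ = (a−d)(a−e)(b−d)(b−e)`, one has
`β₁ + β₂ = (γ/(c−e))·(K((a,b)|(c,d)) − K((a,b)|(e,d)))`. -/
theorem beta_sum_eq_K_difference (a b c d e : ℂ)
    (hab : a ≠ b) (hcd : c ≠ d) (hed : e ≠ d) (hce : c ≠ e)
    (hac : a - c ≠ 0) (had : a - d ≠ 0) (hae : a - e ≠ 0)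
    (hbc : b - c ≠ 0) (hbd : b - d ≠ 0) (hbe : b - e ≠ 0)
    (hac1 : a - c + 1 ≠ 0) (had1 : a - d + 1 ≠ 0) (hae1 : a - e + 1 ≠ 0)
    (hbc1 : b - c + 1 ≠ 0) (hbd1 : b - d + 1 ≠ 0) (hbe1 : b - e + 1 ≠ 0) :
    ((b - d) / (b - c)) * ((a - e + 1) + (b - e) / (a - c)) +
        (fp a c * ((a - e) / (b - c)) + ((a - d) * (b - e) + 1) / (a - c)) =
      ((a - d) * (a - e) * (b - d) * (b - e) / (c - e)) *
        (Ksq a b c d - Ksq a b e d) := by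
  have hab' : a - b ≠ 0 := sub_ne_zero.2 hab
  have hdc : d - c ≠ 0 := sub_ne_zero.2 (Ne.symm hcd)
  have hde : d - e ≠ 0 := sub_ne_zero.2 (Ne.symm hed)
  have hce' : c - e ≠ 0 := sub_ne_zero.2 hce
  rw [Ksq_eq a b c d hab' hdc hac had hbc hbd hac1 had1 hbc1 hbd1,
      Ksq_eq a b e d hab' hde hae had hbe hbd hae1 had1 hbe1 hbd1]
  have hD1 : (a - c) * (a - d) * (b - c) * (b - d) ≠ 0 :=
    mul_ne_zero (mul_ne_zero (mul_ne_zero hac had) hbc) hbd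
  have hD2 : (a - e) * (a - d) * (b - e) * (b - d) ≠ 0 :=
    mul_ne_zero (mul_ne_zero (mul_ne_zero hae had) hbe) hbd
  rw [div_sub_div _ _ hD1 hD2]
  have hK : (c - e) * ((a - d) * (a - e) * (b - d) * (b - e)) ≠ 0 :=
    mul_ne_zero hce' (mul_ne_zero (mul_ne_zero (mul_ne_zero had hae) hbd) hbe)
  have hKd : (a - d) * (b - d) ≠ 0 := mul_ne_zero had hbd
  have hnum : ((a - c) * (b - d) + (a - d) * (b - c) + (a - c) + (b - d) + 1) *
        ((a - e) * (a - d) * (b - e) * (b - d)) -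
      (a - c) * (a - d) * (b - c) * (b - d) *
        ((a - e) * (b - d) + (a - d) * (b - e) + (a - e) + (b - d) + 1) =
      ((c - e) * Mnum a b c d e) * ((a - d) * (b - d)) := by
    unfold Mnum; ring
  have hden : (a - c) * (a - d) * (b - c) * (b - d) * ((a - e) * (a - d) * (b - e) * (b - d)) =
      ((a - c) * (b - c) * (a - e) * (b - e) * (a - d) * (b - d)) * ((a - d) * (b - d)) := by
    ring
  rw [hnum, hden, mul_div_mul_right _ _ hKd, div_mul_div_comm]
  have hnum2 : (a - d) * (a - e) * (b - d) * (b - e) * ((c - e) * Mnum a b c d e) =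
      Mnum a b c d e * ((c - e) * ((a - d) * (a - e) * (b - d) * (b - e))) := by ring
  have hden2 : (c - e) * ((a - c) * (b - c) * (a - e) * (b - e) * (a - d) * (b - d)) =
      ((a - c) * (b - c)) * ((c - e) * ((a - d) * (a - e) * (b - d) * (b - e))) := by ring
  rw [hnum2, hden2, mul_div_mul_right _ _ hK, fp]
  field_simp
  unfold Mnum
  ring

end TY
end
end

section
/- Let n̂ ≥ 2, m ≥ 1, ρ ∈ ℂ and u₁, …, u_m ∈ ℂ with u_i + u_m + ρ ≠ 0 for all i < m; write ũ := −u−ρ. On (ℂ^{n̂})^{⊗m}⊗(ℂ^{n̂})^{⊗m}, with the first m tensor factors labelled ȧ₁,…,ȧ_m and the last m labelled ä₁,…,ä_m, let η := E₂^{⊗m}⊗E₁^{⊗m} and ℛ := R_{ȧ_{m−1}ä_m}(ũ_{m−1}−u_m)·R_{ȧ_{m−2}ä_m}(ũ_{m−2}−u_m)⋯R_{ȧ_1ä_m}(ũ_1−u_m). Then ℛ·η = η + Σ_{j=1}^{m−1} [ ∏_{k=j+1}^{m−1} f^+(u_k, ũ_m) ] / (u_j − ũ_m) · P_{ȧ_jä_m}·η,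 where P_{ȧ_jä_m} is the permutation of the factors ȧ_j and ä_m. -/
open scoped BigOperators Classical

noncomputable section

namespace TY

/-- `ũ := -u - ρ`. -/
def ut (ρ w : ℂ) : ℂ := -w - ρ

/-- Index type for `(ℂ^{n̂})^{⊗m} ⊗ (ℂ^{n̂})^{⊗m}`, the first `m` factors being labelled
`ȧ₁,…,ȧ_m` (first component) and the last `m` factors `ä₁,…,ä_m` (second component). -/
abbrev WIdx (nh m : ℕ) := (Fin m → Fin nh) × (Fin m → Fin nh)

/-- A two-site operator: `A` acting on the factors `ȧ_i` and `ä_l`. -/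
def twoSite (nh m : ℕ) (A : Matrix (Fin nh × Fin nh) (Fin nh × Fin nh) ℂ) (i l : Fin m) :
    Matrix (WIdx nh m) (WIdx nh m) ℂ :=
  Matrix.of fun x y => A (x.1 i, x.2 l) (y.1 i, y.2 l) *
    (if (∀ r, r ≠ i → x.1 r = y.1 r) ∧ (∀ r, r ≠ l → x.2 r = y.2 r) then 1 else 0)

/-- The vector `η = E₂^{⊗m} ⊗ E₁^{⊗m}`. -/
def etaV (nh m : ℕ) (h2 : 2 ≤ nh) : WIdx nh m → ℂ :=
  fun x => if (∀ r, x.1 r = ⟨1, h2⟩) ∧ (∀ r, x.2 r = ⟨0, by omega⟩) then 1 else 0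

/-!
Write `R(c) = 1 + (-c)⁻¹ P`. The vector `w_j := P_{ȧ_j ä_m} η` carries `E₂` at `ä_m` and at every
`ȧ_i` with `i ≠ j`, so it is fixed by every `P_{ȧ_i ä_m}` with `i ≠ j`. Applying
`R_{ȧ_1 ä_m}, R_{ȧ_2 ä_m}, …` to `η` in turn, the `k`-th factor therefore creates `w_k` with
coefficient `(u_k - ũ_m)⁻¹` and multiplies the coefficients of the earlier `w_j` by
`1 + (u_k - ũ_m)⁻¹ = f⁺(u_k, ũ_m)`.
-/

open Finset Matrix Fin.NatCast

lemma List.prod_reverse_map_range_ite {M : Type*} [Monoid M] (G : ℕ → M) {N m : ℕ} (h : N ≤ m) :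
    ((List.range m).reverse.map fun k => if k < N then G k else 1).prod
      = ((List.range N).reverse.map G).prod := by
  induction m, h using Nat.le_induction with
  | base => exact congrArg _ (List.map_congr_left fun k hk => if_pos (by simpa using hk))
  | succ m hNm ih =>
    rw [List.range_succ, List.reverse_append, List.reverse_singleton, List.singleton_append,
      List.map_cons, List.prod_cons, if_neg (by omega), one_mul, ih]

lemma List.prod_reverse_map_finRange_ite {M : Type*} [Monoid M] {N m : ℕ} (F : Fin m → M)
    (G : ℕ → M) (hFG : ∀ j : Fin m, j.val < N → F j = G j) (h : N ≤ m) :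
    ((List.finRange m).reverse.map fun j => if j.val < N then F j else 1).prod
      = ((List.range N).reverse.map G).prod := by
  rw [← prod_reverse_map_range_ite G h, ← List.map_coe_finRange_eq_range, List.map_reverse,
    List.map_reverse, List.map_map]
  congr 3
  funext j
  simp only [Function.comp_apply]
  split_ifs with hj
  exacts [hFG j hj, rfl]

lemma Fin.sum_Iio_eq_sum_range {M : Type*} [AddCommMonoid M] {n : ℕ} (a : Fin n) (f : ℕ → M) :
    ∑ j ∈ Iio a, f j = ∑ j ∈ range a, f j := by
  rw [← Nat.Iio_eq_range, ← Fin.map_valEmbedding_Iio, sum_map]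
  rfl

lemma Fin.prod_Ioo_eq_prod_Ioo_val {M : Type*} [CommMonoid M] {n : ℕ} (a b : Fin n) (f : ℕ → M) :
    ∏ k ∈ Ioo a b, f k = ∏ k ∈ Ioo (a : ℕ) b, f k := by
  rw [← Fin.map_valEmbedding_Ioo, prod_map]
  rfl

theorem Matrix.list_prod_one_add_smul_mulVec {K ι : Type*} [CommRing K] [Fintype ι]
    [DecidableEq ι] (s : ℕ → K) (P : ℕ → Matrix ι ι K) (e : ι → K) (w : ℕ → ι → K) (n : ℕ)
    (hPe : ∀ k < n, P k *ᵥ e = w k) (hPw : ∀ j k, j < k → k < n → P k *ᵥ w j = w j) :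
    ((List.range n).reverse.map fun k => 1 + s k • P k).prod *ᵥ e
      = e + ∑ j ∈ range n, ((∏ k ∈ Ioo j n, (1 + s k)) * s j) • w j := by
  induction n with
  | zero => simp
  | succ n ih =>
    set S := ∑ j ∈ range n, ((∏ k ∈ Ioo j n, (1 + s k)) * s j) • w j
    have hPS : P n *ᵥ S = S := by
      simp only [S, mulVec_sum, mulVec_smul]
      exact sum_congr rfl fun j hj => by rw [hPw j n (mem_range.1 hj) n.lt_succ_self]
    have hshift : ∑ j ∈ range n, ((∏ k ∈ Ioo j (n + 1), (1 + s k)) * s j) • w j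
        = (1 + s n) • S := by
      rw [smul_sum]
      refine sum_congr rfl fun j hj => ?_
      have : Ioo j (n + 1) = insert n (Ioo j n) := by ext; simp at hj ⊢; omega
      rw [this, prod_insert (by simp), smul_smul, mul_assoc]
    rw [List.range_succ, List.reverse_append, List.reverse_singleton, List.singleton_append,
      List.map_cons, List.prod_cons, ← mulVec_mulVec,
      ih (fun k hk => hPe k (by omega)) (fun j k hjk hk => hPw j k hjk (by omega)),
      add_mulVec, one_mulVec, smul_mulVec, mulVec_add, hPe n n.lt_succ_self, hPS,
      sum_range_succ, hshift, show Ioo n (n + 1) = ∅ by ext; simp, prod_empty, one_mul]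
    module

lemma fp_eq_one_add_inv {a b : ℂ} (h : a - b ≠ 0) : fp a b = 1 + (a - b)⁻¹ := by
  rw [fp, add_div, div_self h, one_div]

lemma neg_ut_sub (ρ a b : ℂ) : -(ut ρ a - b) = a - ut ρ b := by
  simp only [ut]
  ring

lemma Rm_eq_one_add_smul_Pm (k : ℕ) (c : ℂ) : Rm k c = 1 + (-c)⁻¹ • Pm k := by
  rw [Rm, inv_neg, neg_smul, sub_eq_add_neg]

section twoSite

variable {nh m : ℕ}

lemma twoSite_add (A B : Matrix (Fin nh × Fin nh) (Fin nh × Fin nh) ℂ) (i l : Fin m) :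
    twoSite nh m (A + B) i l = twoSite nh m A i l + twoSite nh m B i l := by
  ext x y
  simp only [twoSite, of_apply, Matrix.add_apply, add_mul]

lemma twoSite_smul (c : ℂ) (A : Matrix (Fin nh × Fin nh) (Fin nh × Fin nh) ℂ) (i l : Fin m) :
    twoSite nh m (c • A) i l = c • twoSite nh m A i l := by
  ext x y
  simp only [twoSite, of_apply, Matrix.smul_apply, smul_eq_mul, mul_assoc]

lemma twoSite_one (i l : Fin m) : twoSite nh m 1 i l = 1 := by
  ext x y
  have hsite (f g : Fin m → Fin nh) (a : Fin m) : f = g ↔ f a = g a ∧ ∀ r ≠ a, f r = g r := by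
    conv_lhs => rw [← Function.update_eq_self a g]
    exact Function.eq_update_iff
  simp only [twoSite, of_apply, one_apply, Prod.ext_iff, ite_zero_mul_ite_zero, mul_one]
  refine if_congr ?_ rfl rfl
  rw [hsite x.1 y.1 i, hsite x.2 y.2 l]
  tauto

lemma twoSite_Rm (c : ℂ) (i l : Fin m) :
    twoSite nh m (Rm nh c) i l = 1 + (-c)⁻¹ • twoSite nh m (Pm nh) i l := by
  rw [Rm_eq_one_add_smul_Pm, twoSite_add, twoSite_one, twoSite_smul]

def swapSites (i l : Fin m) (x : WIdx nh m) : WIdx nh m :=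
  (Function.update x.1 i (x.2 l), Function.update x.2 l (x.1 i))

lemma swapSites_eq_self {i l : Fin m} {x : WIdx nh m} (h : x.1 i = x.2 l) :
    swapSites i l x = x := by
  rw [swapSites, ← h, Function.update_eq_self, h, Function.update_eq_self]

lemma twoSite_Pm_mulVec_single (i l : Fin m) (x : WIdx nh m) :
    twoSite nh m (Pm nh) i l *ᵥ Pi.single x 1 = Pi.single (swapSites i l x) 1 := by
  ext y
  simp only [mulVec_single_one, col_apply, twoSite, Pm, of_apply, ite_zero_mul_ite_zero, mul_one,
    Pi.single_apply, swapSites, Prod.ext_iff, Function.eq_update_iff]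
  refine if_congr ?_ rfl rfl
  tauto

lemma etaV_eq_single (h2 : 2 ≤ nh) :
    etaV nh m h2 = Pi.single (fun _ => ⟨1, h2⟩, fun _ => ⟨0, by omega⟩) 1 := by
  ext x
  simp [etaV, Pi.single_apply, Prod.ext_iff, funext_iff]

lemma twoSite_Pm_mulVec_twoSite_Pm_mulVec_etaV (h2 : 2 ≤ nh) {i j : Fin m} (hij : i ≠ j)
    (l : Fin m) :
    twoSite nh m (Pm nh) i l *ᵥ (twoSite nh m (Pm nh) j l *ᵥ etaV nh m h2)
      = twoSite nh m (Pm nh) j l *ᵥ etaV nh m h2 := by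
  simp only [etaV_eq_single, twoSite_Pm_mulVec_single]
  rw [swapSites_eq_self]
  simp only [swapSites, Function.update_of_ne hij, Function.update_self]

end twoSite

/-- with `ℛ = R_{ȧ_{m−1}ä_m}(ũ_{m−1}−u_m)⋯R_{ȧ_1ä_m}(ũ_1−u_m)`,
`ℛ·η = η + Σ_{j=1}^{m−1} [∏_{k=j+1}^{m−1} f⁺(u_k,ũ_m)]/(u_j − ũ_m) · P_{ȧ_jä_m}·η`
(indices realised 0-based, so the last index is `⟨m-1,_⟩`). -/
theorem R_product_on_vacuum (nh m : ℕ) (h2 : 2 ≤ nh) (hm : 1 ≤ m) (ρ : ℂ)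
    (u : Fin m → ℂ)
    (hgen : ∀ i : Fin m, i.val < m - 1 → u i + u ⟨m - 1, by omega⟩ + ρ ≠ 0) :
    (((List.finRange m).reverse.map fun j =>
        if j.val < m - 1 then
          twoSite nh m (Rm nh (ut ρ (u j) - u ⟨m - 1, by omega⟩)) j ⟨m - 1, by omega⟩
        else 1).prod).mulVec (etaV nh m h2)
      = etaV nh m h2 +
        ∑ j ∈ Finset.univ.filter (fun j : Fin m => j.val < m - 1),
          ((∏ k ∈ Finset.Ioo j (⟨m - 1, by omega⟩ : Fin m),
              fp (u k) (ut ρ (u ⟨m - 1, by omega⟩))) /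
            (u j - ut ρ (u ⟨m - 1, by omega⟩))) •
            (twoSite nh m (Pm nh) j ⟨m - 1, by omega⟩).mulVec (etaV nh m h2) := by
  have : NeZero m := ⟨by omega⟩
  set L : Fin m := ⟨m - 1, by omega⟩
  set s : ℕ → ℂ := fun k => (u (k : Fin m) - ut ρ (u L))⁻¹
  set P : ℕ → Matrix (WIdx nh m) (WIdx nh m) ℂ := fun k => twoSite nh m (Pm nh) (k : Fin m) L
  have hfix : ∀ j k, j < k → k < m - 1 → P k *ᵥ (P j *ᵥ etaV nh m h2) = P j *ᵥ etaV nh m h2 :=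
    fun j k hjk hk => twoSite_Pm_mulVec_twoSite_Pm_mulVec_etaV h2 (by
      rw [ne_eq, Fin.ext_iff, Fin.val_cast_of_lt (by omega), Fin.val_cast_of_lt (by omega)]
      omega) L
  have hfp : ∀ k : Fin m, k < L → 1 + s k = fp (u k) (ut ρ (u L)) := fun k hk => by
    have hden : u k - ut ρ (u L) ≠ 0 := fun h =>
      hgen k hk (by simp only [ut] at h; linear_combination h)
    simp only [s, Fin.cast_val_eq_self, fp_eq_one_add_inv hden]
  have hfilter : univ.filter (fun j : Fin m => j.val < m - 1) = Iio L := by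
    ext j
    simp [Fin.lt_def, L]
  rw [List.prod_reverse_map_finRange_ite _ (fun k => 1 + s k • P k)
      (fun j _ => by simp only [twoSite_Rm, neg_ut_sub, s, P, Fin.cast_val_eq_self]) (by omega),
    Matrix.list_prod_one_add_smul_mulVec s P _ _ (m - 1) (fun _ _ => rfl) hfix, hfilter,
    ← Fin.sum_Iio_eq_sum_range L]
  refine congrArg _ (sum_congr rfl fun j _ => ?_)
  rw [← Fin.prod_Ioo_eq_prod_Ioo_val j L, prod_congr rfl fun k hk => hfp k (mem_Ioo.1 hk).2,
    div_eq_mul_inv]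
  simp only [s, P, Fin.cast_val_eq_self]

end TY
end
end
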